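/- Let G be a graph and s a vertex such that the ball graph B(s,k) is a tree. If any cycle C in G contains a vertex of V_s^{k−t} for some 0 ≤ t ≤ k, then C has length greater than 2t. -/

import Mathlib

open SimpleGraph

variable {V : Type*}

/-- The set of vertices at distance at most `r` from `u` in `G`. -/
def vball (G : SimpleGraph V) (u : V) (r : ℕ) : Set V :=
  {w | ∃ p : G.Walk u w, p.length ≤ r}

/-- The set of edges at distance at most `r` from `u` in `G`, where the distance
from `u` to an edge is one more than the distance to its closer endpoint. -/
def eball (G : SimpleGraph V) (u : V) (r : ℕ) : Set (Sym2 V) :=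
  {e | e ∈ G.edgeSet ∧ ∃ a ∈ e, ∃ p : G.Walk u a, p.length + 1 ≤ r}

/-- The ball graph `B(v,R)`: vertices at distance ≤ R from `v` together with
all edges at distance ≤ R from `v`, as a subgraph of `G`. -/
def ballSub (G : SimpleGraph V) (v : V) (R : ℕ) : G.Subgraph where
  verts := vball G v R
  Adj a b := G.Adj a b ∧
    ((∃ p : G.Walk v a, p.length + 1 ≤ R) ∨ (∃ p : G.Walk v b, p.length + 1 ≤ R))
  adj_sub h := h.1
  edge_vert := by
    rintro a b ⟨hab, ⟨p, hp⟩ | ⟨p, hp⟩⟩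
    · exact ⟨p, by omega⟩
    · exact ⟨p.concat hab.symm, by rw [SimpleGraph.Walk.length_concat]; omega⟩
  symm := by
    constructor
    rintro a b ⟨hab, h⟩
    exact ⟨hab.symm, h.symm⟩

/-- The graph `G \ {s}`: delete the vertex `s` together with its incident edges. -/
def delVert (G : SimpleGraph V) (s : V) : SimpleGraph V where
  Adj a b := G.Adj a b ∧ a ≠ s ∧ b ≠ s
  symm := by constructor; rintro a b ⟨h, ha, hb⟩; exact ⟨h.symm, hb, ha⟩
  loopless := by constructor; rintro a ⟨h, _, _⟩; exact G.ne_of_adj h rfl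

/-- The set of vertices at distance exactly `r` from `u` in `G`. -/
def vsphere (G : SimpleGraph V) (u : V) (r : ℕ) : Set V :=
  {w | (∃ p : G.Walk u w, p.length = r) ∧ ∀ q : G.Walk u w, r ≤ q.length}


private lemma dart_split {G : SimpleGraph V} {x y : V} (p : G.Walk x y) :
    ∀ d ∈ p.darts, ∃ (r1 : G.Walk x d.fst) (r2 : G.Walk d.snd y),
      r1.length + r2.length + 1 = p.length := by
  induction p with
  | nil => simp
  | cons h q ih =>
    intro d hd
    rw [SimpleGraph.Walk.darts_cons, List.mem_cons] at hd
    rcases hd with rfl | hd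
    · exact ⟨SimpleGraph.Walk.nil, q, by simp⟩
    · obtain ⟨r1, r2, hr⟩ := ih d hd
      refine ⟨SimpleGraph.Walk.cons h r1, r2, ?_⟩
      simp only [SimpleGraph.Walk.length_cons]
      omega

private lemma lift_walk {G : SimpleGraph V} (H : G.Subgraph) {a b : V} (p : G.Walk a b) :
    (∀ e ∈ p.edges, e ∈ H.edgeSet) →
      ∀ (ha : a ∈ H.verts) (hb : b ∈ H.verts),
      ∃ p' : H.coe.Walk ⟨a, ha⟩ ⟨b, hb⟩, p'.map H.hom = p := by
  induction p with
  | nil => intro _ ha hb; exact ⟨SimpleGraph.Walk.nil, rfl⟩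
  | @cons a w b h q ih =>
    intro he ha hb
    have hadj : H.Adj a w := Subgraph.mem_edgeSet.mp (he _ (by simp))
    obtain ⟨q', hq'⟩ := ih (fun e hee => he e (by simp [hee])) hadj.snd_mem hb
    refine ⟨SimpleGraph.Walk.cons (show H.coe.Adj ⟨a, ha⟩ ⟨w, hadj.snd_mem⟩ from hadj) q', ?_⟩
    simp only [SimpleGraph.Walk.map_cons, hq']
    rfl

/-- If the ball graph `B(s,k)` is a tree and a cycle `C` contains a vertex of
`V_s^{k−t}` for some `0 ≤ t ≤ k`, then `C` has length greater than `2t`. -/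
theorem stmt_11 [Fintype V] (G : SimpleGraph V) (s : V) (k t : ℕ) (ht : t ≤ k)
    (htree : (ballSub G s k).coe.IsTree) (u : V) (hu : u ∈ vball G s (k - t))
    (c : G.Walk u u) (hc : c.IsCycle) : 2 * t < c.length := by
  by_contra hlt
  push_neg at hlt
  obtain ⟨q, hq⟩ := hu
  have he : ∀ e ∈ c.edges, e ∈ (ballSub G s k).edgeSet := by
    intro e hee
    rw [SimpleGraph.Walk.edges, List.mem_map] at hee
    obtain ⟨d, hd, rfl⟩ := hee
    obtain ⟨⟨x, y⟩, hxy⟩ := d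
    obtain ⟨r1, r2, hr⟩ := dart_split c _ hd
    have h3 : 3 ≤ c.length := hc.three_le_length
    have hcase : r1.length + 1 ≤ t ∨ r2.length + 1 ≤ t := by omega
    show s(x, y) ∈ _
    rw [SimpleGraph.Subgraph.mem_edgeSet]
    refine ⟨hxy, ?_⟩
    rcases hcase with h1 | h2
    · left
      refine ⟨q.append r1, ?_⟩
      rw [SimpleGraph.Walk.length_append]
      omega
    · right
      refine ⟨q.append r2.reverse, ?_⟩
      rw [SimpleGraph.Walk.length_append, SimpleGraph.Walk.length_reverse]
      omega
  have hus : u ∈ (ballSub G s k).verts := ⟨q, le_trans hq (Nat.sub_le _ _)⟩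
  obtain ⟨c', hc'⟩ := lift_walk (ballSub G s k) c he hus hus
  refine htree.IsAcyclic c' ?_
  rw [← SimpleGraph.Walk.map_isCycle_iff_of_injective SimpleGraph.Subgraph.hom_injective, hc']
  exact hc
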